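/- For any simple graph G with girth at least 4 and m edges, Σ_{uv∈E(G)} F(G−{u,v}) = (m+3)F(G) − M₁⁴(G) − 3α(G) + 6M₂(G) − 4M₁(G) + 2m. -/

import Mathlib

open Finset

namespace PaperMatching

open scoped Classical

variable {V : Type*}

/-- The number of `k`-matchings of `G`: sets of `k` pairwise vertex-disjoint edges. -/
noncomputable def pM (G : SimpleGraph V) [Fintype V] (k : ℕ) : ℕ :=
  ((G.edgeFinset.powersetCard k).filter
    (fun s => ∀ e ∈ s, ∀ f ∈ s, e ≠ f → ∀ v : V, ¬(v ∈ e ∧ v ∈ f))).card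

/-- First general Zagreb index `∑ deg(v)^k`. -/
noncomputable def M1gen (G : SimpleGraph V) [Fintype V] (k : ℕ) : ℕ :=
  ∑ v : V, (G.degree v) ^ k

/-- First Zagreb index. -/
noncomputable def M1 (G : SimpleGraph V) [Fintype V] : ℕ := M1gen G 2

/-- Forgotten index. -/
noncomputable def Fidx (G : SimpleGraph V) [Fintype V] : ℕ := M1gen G 3

/-- Second Zagreb index `∑_{uv ∈ E} deg(u) deg(v)`. -/
noncomputable def M2 (G : SimpleGraph V) [Fintype V] : ℕ :=
  ∑ e ∈ G.edgeFinset,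
    Sym2.lift ⟨fun u v => G.degree u * G.degree v, fun u v => by ring⟩ e

/-- `α(G) = ∑_{uv ∈ E} deg(u) deg(v) (deg(u) + deg(v))`. -/
noncomputable def alphaI (G : SimpleGraph V) [Fintype V] : ℕ :=
  ∑ e ∈ G.edgeFinset,
    Sym2.lift ⟨fun u v => G.degree u * G.degree v * (G.degree u + G.degree v),
      fun u v => by ring⟩ e

/-- `α₂(G) = ∑_{uv ∈ E} deg(u) deg(v) (deg(u)² + deg(v)²)`. -/
noncomputable def alpha2 (G : SimpleGraph V) [Fintype V] : ℕ :=
  ∑ e ∈ G.edgeFinset,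
    Sym2.lift ⟨fun u v => G.degree u * G.degree v * (G.degree u ^ 2 + G.degree v ^ 2),
      fun u v => by ring⟩ e

/-- Sum of the degrees of the two endpoints of an edge. -/
noncomputable def degSum (G : SimpleGraph V) [Fintype V] (e : Sym2 V) : ℕ :=
  Sym2.lift ⟨fun u v => G.degree u + G.degree v, fun u v => by ring⟩ e

/-- Edge degree `deg(e) = deg(u) + deg(v) - 2` for `e = uv`, as a rational number. -/
noncomputable def degE (G : SimpleGraph V) [Fintype V] (e : Sym2 V) : ℚ :=
  (degSum G e : ℚ) - 2

/-- Ordered pairs of distinct incident edges. -/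
noncomputable def incPairs (G : SimpleGraph V) [Fintype V] : Finset (Sym2 V × Sym2 V) :=
  (G.edgeFinset ×ˢ G.edgeFinset).filter (fun p => p.1 ≠ p.2 ∧ ∃ v : V, v ∈ p.1 ∧ v ∈ p.2)

/-- First reformulated Zagreb index `EM₁(G) = ∑_e deg(e)²`. -/
noncomputable def EM1 (G : SimpleGraph V) [Fintype V] : ℚ :=
  ∑ e ∈ G.edgeFinset, (degE G e) ^ 2

/-- Second reformulated Zagreb index `EM₂(G) = ∑_{e ∼ f} deg(e) deg(f)`, the sum being over
unordered pairs of distinct incident edges (encoded as half the sum over ordered pairs). -/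
noncomputable def EM2 (G : SimpleGraph V) [Fintype V] : ℚ :=
  (∑ p ∈ incPairs G, degE G p.1 * degE G p.2) / 2

/-- `β(G) = ∑_{e ∼ f} deg(e ∩ f) (deg(e) + deg(f))` over unordered pairs of distinct incident
edges, where `e ∩ f` is the common vertex (encoded as half the sum over ordered pairs, the inner
sum running over the unique common vertex). -/
noncomputable def betaI (G : SimpleGraph V) [Fintype V] : ℚ :=
  (∑ p ∈ incPairs G, ∑ v ∈ univ.filter (fun v : V => v ∈ p.1 ∧ v ∈ p.2),
      (G.degree v : ℚ) * (degE G p.1 + degE G p.2)) / 2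

/-- `γ(G) = ∑ deg(v)(deg(x)+deg(y))` over pairs of a vertex `v` and an edge `xy` with
`v ∉ {x,y}` and `v` adjacent to an endpoint of `xy`. -/
noncomputable def gammaI (G : SimpleGraph V) [Fintype V] : ℕ :=
  ∑ v : V, ∑ e ∈ G.edgeFinset,
    if v ∉ e ∧ ∃ w ∈ e, G.Adj v w then G.degree v * degSum G e else 0

/-- The graph obtained from `G` by deleting both endpoints of the edge `e` (kept on the same
vertex type; the deleted vertices become isolated). -/
def edel (G : SimpleGraph V) (e : Sym2 V) : SimpleGraph V where
  Adj a b := G.Adj a b ∧ a ∉ e ∧ b ∉ e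
  symm := ⟨fun a b ⟨h, ha, hb⟩ => ⟨h.symm, hb, ha⟩⟩
  loopless := ⟨fun a ⟨h, _, _⟩ => G.ne_of_adj h rfl⟩

/-- The star graph on `n` vertices: vertex `0` is adjacent to all others. -/
def starGraph (n : ℕ) : SimpleGraph (Fin n) where
  Adj a b := a ≠ b ∧ (a.val = 0 ∨ b.val = 0)
  symm := ⟨fun a b ⟨h, h0⟩ => ⟨h.symm, h0.symm⟩⟩
  loopless := ⟨fun a ⟨h, _⟩ => h rfl⟩


section Aux

variable [Fintype V] (G : SimpleGraph V)

lemma tf (hg : (4:ℕ∞) ≤ G.egirth) {a b c : V} (hab : G.Adj a b) (hbc : G.Adj b c)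
    (hca : G.Adj c a) : False := by
  have hab' : a ≠ b := hab.ne
  have hbc' : b ≠ c := hbc.ne
  have hca' : c ≠ a := hca.ne
  have hcyc : (SimpleGraph.Walk.cons hab (SimpleGraph.Walk.cons hbc
      (SimpleGraph.Walk.cons hca SimpleGraph.Walk.nil))).IsCycle := by
    rw [SimpleGraph.Walk.cons_isCycle_iff]
    refine ⟨?_, ?_⟩
    · simp [SimpleGraph.Walk.cons_isPath_iff, hca', hbc', hab'.symm, hca'.symm]
    · simp only [SimpleGraph.Walk.edges_cons, SimpleGraph.Walk.edges_nil, List.mem_cons,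
        Sym2.eq_iff]
      push_neg
      simp_all
      tauto
  have := SimpleGraph.le_egirth.mp hg a _ hcyc
  simp only [SimpleGraph.Walk.length_cons, SimpleGraph.Walk.length_nil] at this
  norm_num at this

lemma deg_cast (H : SimpleGraph V) (w : V) :
    (H.degree w : ℚ) = ∑ x : V, if H.Adj w x then (1 : ℚ) else 0 := by
  rw [← Finset.sum_filter, Finset.sum_const, ← SimpleGraph.neighborFinset_eq_filter,
    SimpleGraph.card_neighborFinset_eq_degree]
  simp

lemma edel_deg {u v : V} (huv : G.Adj u v) (w : V) :
    ((edel G s(u, v)).degree w : ℚ) = if w = u ∨ w = v then 0 else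
      (G.degree w : ℚ) - (if G.Adj u w then 1 else 0) - (if G.Adj v w then 1 else 0) := by
  have hadj : ∀ a b : V, (edel G s(u, v)).Adj a b ↔
      G.Adj a b ∧ ¬(a = u ∨ a = v) ∧ ¬(b = u ∨ b = v) := by
    intro a b
    simp [edel, Sym2.mem_iff]
  rw [deg_cast]
  by_cases hw : w = u ∨ w = v
  · rw [if_pos hw]
    refine Finset.sum_eq_zero fun x _ => ?_
    rw [if_neg]
    rw [hadj]
    tauto
  · rw [if_neg hw, deg_cast G w]
    have key : ∀ x : V, (if (edel G s(u, v)).Adj w x then (1:ℚ) else 0)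
        = (if G.Adj w x then (1:ℚ) else 0)
          - (if x = u then (if G.Adj u w then (1:ℚ) else 0) else 0)
          - (if x = v then (if G.Adj v w then (1:ℚ) else 0) else 0) := by
      intro x
      rw [hadj]
      by_cases hxu : x = u
      · subst hxu
        have : ¬ x = v := fun h => (huv.ne (h ▸ rfl)).elim
        simp [this, hw, SimpleGraph.adj_comm]
      · by_cases hxv : x = v
        · subst hxv
          simp [hxu, hw, SimpleGraph.adj_comm]
        · simp [hxu, hxv, hw]
    rw [Finset.sum_congr rfl (fun x _ => key x), Finset.sum_sub_distrib,
      Finset.sum_sub_distrib]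
    simp [Finset.sum_ite_eq]

lemma Fidx_cast (H : SimpleGraph V) : (Fidx H : ℚ) = ∑ w : V, (H.degree w : ℚ) ^ 3 := by
  unfold Fidx M1gen
  push_cast
  rfl

lemma Fidx_edel (htf : ∀ {a b c : V}, G.Adj a b → G.Adj b c → G.Adj c a → False)
    {u v : V} (huv : G.Adj u v) :
    (Fidx (edel G s(u, v)) : ℚ) = (Fidx G : ℚ)
      - ((G.degree u : ℚ) ^ 3 + (G.degree v : ℚ) ^ 3)
      - ∑ w : V, (if w = u ∨ w = v then 0 else
          ((if G.Adj u w then (1:ℚ) else 0) + (if G.Adj v w then 1 else 0)) *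
            (3 * (G.degree w : ℚ) ^ 2 - 3 * (G.degree w : ℚ) + 1)) := by
  rw [Fidx_cast, Fidx_cast]
  have hu3 : ((G.degree u : ℚ)) ^ 3 = ∑ w : V, (if w = u then (G.degree u : ℚ) ^ 3 else 0) := by
    simp [Finset.sum_ite_eq]
  have hv3 : ((G.degree v : ℚ)) ^ 3 = ∑ w : V, (if w = v then (G.degree v : ℚ) ^ 3 else 0) := by
    simp [Finset.sum_ite_eq]
  rw [hu3, hv3, ← Finset.sum_add_distrib, ← Finset.sum_sub_distrib, ← Finset.sum_sub_distrib]
  refine Finset.sum_congr rfl fun w _ => ?_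
  rw [edel_deg G huv w]
  by_cases hwu : w = u
  · subst hwu
    have hwv : ¬ w = v := huv.ne
    simp [hwv, huv.ne]
  · by_cases hwv : w = v
    · subst hwv
      simp [hwu]
    · rw [if_neg (by tauto : ¬(w = u ∨ w = v)), if_neg hwu, if_neg hwv,
        if_neg (by tauto : ¬(w = u ∨ w = v))]
      by_cases hA : G.Adj u w
      · have hB : ¬ G.Adj v w := fun hB => htf huv hB hA.symm
        simp only [if_pos hA, if_neg hB]
        ring
      · by_cases hB : G.Adj v w
        · simp only [if_neg hA, if_pos hB]
          ring
        · simp only [if_neg hA, if_neg hB]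
          ring

noncomputable def SS (g : V → V → ℚ) : ℚ := ∑ u : V, ∑ v : V, if G.Adj u v then g u v else 0

lemma SS_swap (g : V → V → ℚ) : SS G g = SS G (fun u v => g v u) := by
  unfold SS
  rw [Finset.sum_comm]
  refine sum_congr rfl fun u _ => sum_congr rfl fun v _ => ?_
  simp [SimpleGraph.adj_comm]

lemma SS_congr (g₁ g₂ : V → V → ℚ) (h : ∀ u v, g₁ u v = g₂ u v) : SS G g₁ = SS G g₂ := by
  unfold SS
  exact sum_congr rfl fun u _ => sum_congr rfl fun v _ => by rw [h]

lemma sum_ind (u : V) (f : V → ℚ) :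
    ∑ v : V, (if G.Adj u v then f u else 0) = (G.degree u : ℚ) * f u := by
  rw [← Finset.sum_filter]
  rw [Finset.sum_const, ← SimpleGraph.neighborFinset_eq_filter, SimpleGraph.card_neighborFinset_eq_degree]
  simp [mul_comm]

lemma SS_left (f : V → ℚ) : SS G (fun u _ => f u) = ∑ u : V, (G.degree u : ℚ) * f u :=
  sum_congr rfl fun u _ => sum_ind G u f

lemma SS_right (f : V → ℚ) : SS G (fun _ v => f v) = ∑ v : V, (G.degree v : ℚ) * f v := by
  rw [SS_swap]; exact SS_left G f

lemma fiber_eq {u v : V} (huv : G.Adj u v) :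
    (((univ ×ˢ univ).filter fun p : V × V => G.Adj p.1 p.2).filter
      (fun p => Sym2.mk p.1 p.2 = s(u, v))) = {(u, v), (v, u)} := by
  ext p
  obtain ⟨a, b⟩ := p
  simp only [Finset.mem_filter, Finset.mem_product, Finset.mem_univ, true_and,
    Finset.mem_insert, Finset.mem_singleton, Sym2.mk_prod_swap_eq]
  constructor
  · rintro ⟨hadj, he⟩
    rw [Sym2.eq_iff] at he
    rcases he with ⟨rfl, rfl⟩ | ⟨rfl, rfl⟩
    · exact Or.inl rfl
    · exact Or.inr rfl
  · rintro (h | h) <;> cases h <;>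
      simp_all [Sym2.eq_iff, SimpleGraph.adj_comm]

lemma two_mul_sum_edge (g : V → V → ℚ) (hg : ∀ a b, g a b = g b a) :
    2 * ∑ e ∈ G.edgeFinset, Sym2.lift ⟨g, hg⟩ e = SS G g := by
  classical
  set P := ((univ ×ˢ univ).filter fun p : V × V => G.Adj p.1 p.2) with hP
  have hmap : ∀ p ∈ P, Sym2.mk p.1 p.2 ∈ G.edgeFinset := by
    rintro ⟨a, b⟩ hp
    simp only [hP, Finset.mem_filter] at hp
    simpa [SimpleGraph.mem_edgeFinset] using hp.2
  have h1 : ∑ e ∈ G.edgeFinset, ∑ p ∈ P.filter (fun p => Sym2.mk p.1 p.2 = e),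
      Sym2.lift ⟨g, hg⟩ (Sym2.mk p.1 p.2) = ∑ p ∈ P, Sym2.lift ⟨g, hg⟩ (Sym2.mk p.1 p.2) :=
    Finset.sum_fiberwise_of_maps_to hmap _
  have h2 : ∀ e ∈ G.edgeFinset, ∑ p ∈ P.filter (fun p => Sym2.mk p.1 p.2 = e),
      Sym2.lift ⟨g, hg⟩ (Sym2.mk p.1 p.2) = 2 * Sym2.lift ⟨g, hg⟩ e := by
    intro e he
    induction e using Sym2.ind with
    | _ u v =>
      have huv : G.Adj u v := by simpa [SimpleGraph.mem_edgeFinset] using he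
      have hfib : P.filter (fun p => Sym2.mk p.1 p.2 = s(u, v)) = {(u, v), (v, u)} :=
        fiber_eq G huv
      rw [hfib]
      rw [Finset.sum_insert (by simp [Prod.ext_iff, huv.ne]), Finset.sum_singleton]
      simp only [Sym2.lift_mk]
      rw [hg v u]
      ring
  have h3 : SS G g = ∑ p ∈ P, Sym2.lift ⟨g, hg⟩ (Sym2.mk p.1 p.2) := by
    unfold SS
    rw [hP, Finset.sum_filter, Finset.sum_product]
    refine sum_congr rfl fun u _ => sum_congr rfl fun v _ => ?_
    simp
  rw [h3, ← h1, Finset.mul_sum]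
  exact (sum_congr rfl h2).symm

lemma q_split (u v w : V) (c : ℚ) :
    (if G.Adj u v then (if w = u ∨ w = v then 0 else
        ((if G.Adj u w then (1:ℚ) else 0) + (if G.Adj v w then 1 else 0)) * c) else 0)
    = (if G.Adj u v ∧ G.Adj u w ∧ ¬ w = v then c else 0)
      + (if G.Adj u v ∧ G.Adj v w ∧ ¬ w = u then c else 0) := by
  by_cases h1 : G.Adj u v
  · by_cases h2 : w = u
    · subst h2
      simp [h1, SimpleGraph.irrefl]
    · by_cases h3 : w = v
      · subst h3
        simp [h1, h2, SimpleGraph.irrefl]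
      · rw [if_neg (by tauto : ¬(w = u ∨ w = v))]
        by_cases h4 : G.Adj u w <;> by_cases h5 : G.Adj v w <;>
          simp [h1, h2, h3, h4, h5] <;> ring
  · simp [h1]

lemma r_split (u v w : V) (c : V → ℚ) :
    (if G.Adj u v ∧ G.Adj v w ∧ ¬ w = u then c w else 0)
    = (if G.Adj u v then (if G.Adj v w then c w else 0) else 0)
      - (if w = u then (if G.Adj u v then (if G.Adj v w then c w else 0) else 0) else 0) := by
  by_cases h1 : G.Adj u v
  · by_cases h2 : w = u
    · subst h2
      simp [h1, h1.symm]
    · simp [h1, h2]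
  · simp [h1]

lemma SS_b (h : V → ℚ) :
    SS G (fun u v => ∑ w : V, (if w = u ∨ w = v then 0 else
        ((if G.Adj u w then (1:ℚ) else 0) + (if G.Adj v w then 1 else 0)) * h w))
    = 2 * ((∑ v : V, (G.degree v : ℚ) * (∑ w : V, if G.Adj v w then h w else 0))
        - ∑ u : V, (G.degree u : ℚ) * h u) := by
  unfold SS
  have step1 : ∀ u v : V, (if G.Adj u v then (∑ w : V, (if w = u ∨ w = v then 0 else
        ((if G.Adj u w then (1:ℚ) else 0) + (if G.Adj v w then 1 else 0)) * h w)) else 0)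
      = ∑ w : V, ((if G.Adj u v ∧ G.Adj u w ∧ ¬ w = v then h w else 0)
          + (if G.Adj u v ∧ G.Adj v w ∧ ¬ w = u then h w else 0)) := by
    intro u v
    rw [← Finset.sum_congr rfl (fun w _ => q_split G u v w (h w))]
    split_ifs with hc
    · rfl
    · simp
  rw [Finset.sum_congr rfl (fun u _ => Finset.sum_congr rfl (fun v _ => step1 u v))]
  have T12 : ∀ u v : V, ∑ w : V, ((if G.Adj u v ∧ G.Adj u w ∧ ¬ w = v then h w else 0)
          + (if G.Adj u v ∧ G.Adj v w ∧ ¬ w = u then h w else 0))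
      = (∑ w : V, (if G.Adj u v ∧ G.Adj u w ∧ ¬ w = v then h w else 0))
        + ∑ w : V, (if G.Adj u v ∧ G.Adj v w ∧ ¬ w = u then h w else 0) := fun u v =>
    Finset.sum_add_distrib
  rw [Finset.sum_congr rfl (fun u _ => Finset.sum_congr rfl (fun v _ => T12 u v))]
  rw [Finset.sum_congr rfl (fun u _ => Finset.sum_add_distrib), Finset.sum_add_distrib]
  -- T1 = T2
  have hT1 : ∑ u : V, ∑ v : V, ∑ w : V, (if G.Adj u v ∧ G.Adj u w ∧ ¬ w = v then h w else 0)
      = ∑ u : V, ∑ v : V, ∑ w : V, (if G.Adj u v ∧ G.Adj v w ∧ ¬ w = u then h w else 0) := by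
    rw [Finset.sum_comm]
    refine sum_congr rfl fun v _ => sum_congr rfl fun u _ => sum_congr rfl fun w _ => ?_
    refine if_congr ?_ rfl rfl
    constructor
    · rintro ⟨a, b, c⟩; exact ⟨a.symm, b, c⟩
    · rintro ⟨a, b, c⟩; exact ⟨a.symm, b, c⟩
  rw [hT1, ← two_mul]
  congr 1
  -- evaluate T2
  rw [Finset.sum_congr rfl (fun u _ => Finset.sum_congr rfl (fun v _ =>
    Finset.sum_congr rfl (fun w _ => r_split G u v w h)))]
  rw [Finset.sum_congr rfl (fun u _ => Finset.sum_congr rfl (fun v _ =>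
    Finset.sum_sub_distrib _ _)), Finset.sum_congr rfl (fun u _ => Finset.sum_sub_distrib _ _),
    Finset.sum_sub_distrib]
  congr 1
  · -- first part equals SS_right
    have := SS_right G (fun v => ∑ w : V, if G.Adj v w then h w else 0)
    unfold SS at this
    rw [← this]
    refine sum_congr rfl fun u _ => sum_congr rfl fun v _ => ?_
    split_ifs with hc
    · rfl
    · simp
  · -- second part equals SS_left
    have h2 : ∀ u v : V, ∑ w : V, (if w = u then
        (if G.Adj u v then (if G.Adj v w then h w else 0) else 0) else 0)
        = if G.Adj u v then h u else 0 := by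
      intro u v
      rw [Finset.sum_ite_eq' univ u (fun w => if G.Adj u v then (if G.Adj v w then h w else 0) else 0)]
      simp only [Finset.mem_univ, if_true]
      by_cases h1 : G.Adj u v
      · simp [h1, h1.symm]
      · simp [h1]
    rw [Finset.sum_congr rfl (fun u _ => Finset.sum_congr rfl (fun v _ => h2 u v))]
    have := SS_left G h
    unfold SS at this
    rw [this]

lemma SS_add (g₁ g₂ : V → V → ℚ) :
    SS G (fun u v => g₁ u v + g₂ u v) = SS G g₁ + SS G g₂ := by
  unfold SS
  rw [← Finset.sum_add_distrib]
  refine sum_congr rfl fun u _ => ?_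
  rw [← Finset.sum_add_distrib]
  refine sum_congr rfl fun v _ => ?_
  split_ifs <;> simp

lemma SS_sub (g₁ g₂ : V → V → ℚ) :
    SS G (fun u v => g₁ u v - g₂ u v) = SS G g₁ - SS G g₂ := by
  unfold SS
  rw [← Finset.sum_sub_distrib]
  refine sum_congr rfl fun u _ => ?_
  rw [← Finset.sum_sub_distrib]
  refine sum_congr rfl fun v _ => ?_
  split_ifs <;> simp

lemma SS_mulc (c : ℚ) (g : V → V → ℚ) :
    SS G (fun u v => c * g u v) = c * SS G g := by
  unfold SS
  rw [Finset.mul_sum]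
  refine sum_congr rfl fun u _ => ?_
  rw [Finset.mul_sum]
  refine sum_congr rfl fun v _ => ?_
  split_ifs <;> simp

lemma M2_cast : 2 * (M2 G : ℚ) = SS G (fun u v => (G.degree u : ℚ) * (G.degree v : ℚ)) := by
  rw [← two_mul_sum_edge G _ (fun a b => by ring)]
  unfold M2
  push_cast
  congr 1
  refine sum_congr rfl fun e _ => ?_
  induction e using Sym2.ind with
  | _ u v =>
    rw [Sym2.lift_mk, Sym2.lift_mk]
    push_cast
    ring

lemma alpha_cast : 2 * (alphaI G : ℚ) = SS G (fun u v =>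
    (G.degree u : ℚ) * (G.degree v : ℚ) * ((G.degree u : ℚ) + (G.degree v : ℚ))) := by
  rw [← two_mul_sum_edge G _ (fun a b => by ring)]
  unfold alphaI
  push_cast
  congr 1
  refine sum_congr rfl fun e _ => ?_
  induction e using Sym2.ind with
  | _ u v =>
    rw [Sym2.lift_mk, Sym2.lift_mk]
    push_cast
    ring


end Aux

theorem sum_F_edge_deleted (V : Type*) [Fintype V] (G : SimpleGraph V)
    (hg : (4 : ℕ∞) ≤ G.egirth) (m : ℚ) (hm : m = G.edgeFinset.card) :
    (∑ e ∈ G.edgeFinset, (Fidx (edel G e) : ℚ)) =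
      (m + 3) * (Fidx G : ℚ) - (M1gen G 4 : ℚ) - 3 * (alphaI G : ℚ)
        + 6 * (M2 G : ℚ) - 4 * (M1 G : ℚ) + 2 * m := by

  have htf : ∀ {a b c : V}, G.Adj a b → G.Adj b c → G.Adj c a → False :=
    fun hab hbc hca => tf G hg hab hbc hca
  -- abbreviations
  set h : V → ℚ := fun w => 3 * (G.degree w : ℚ) ^ 2 - 3 * (G.degree w : ℚ) + 1 with hh
  -- the two lift functions
  have pB : ∀ a b : V, (∑ w : V, (if w = a ∨ w = b then 0 else
        ((if G.Adj a w then (1:ℚ) else 0) + (if G.Adj b w then 1 else 0)) * h w))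
      = ∑ w : V, (if w = b ∨ w = a then 0 else
        ((if G.Adj b w then (1:ℚ) else 0) + (if G.Adj a w then 1 else 0)) * h w) := by
    intro a b
    refine Finset.sum_congr rfl fun w _ => ?_
    rw [add_comm (if G.Adj a w then (1:ℚ) else 0)]
    exact if_congr or_comm rfl rfl
  have key : ∀ e ∈ G.edgeFinset, (Fidx (edel G e) : ℚ) = (Fidx G : ℚ)
      - Sym2.lift ⟨fun a b => (G.degree a : ℚ) ^ 3 + (G.degree b : ℚ) ^ 3,
          fun a b => by ring⟩ e
      - Sym2.lift ⟨fun u v => ∑ w : V, (if w = u ∨ w = v then 0 else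
          ((if G.Adj u w then (1:ℚ) else 0) + (if G.Adj v w then 1 else 0)) * h w),
          pB⟩ e := by
    intro e he
    induction e using Sym2.ind with
    | _ u v =>
      have huv : G.Adj u v := by simpa [SimpleGraph.mem_edgeFinset] using he
      rw [Sym2.lift_mk, Sym2.lift_mk]
      exact Fidx_edel G htf huv
  rw [Finset.sum_congr rfl key, Finset.sum_sub_distrib, Finset.sum_sub_distrib,
    Finset.sum_const, nsmul_eq_mul, ← hm]
  -- named sums
  set SA : ℚ := ∑ e ∈ G.edgeFinset,
    Sym2.lift ⟨fun a b => (G.degree a : ℚ) ^ 3 + (G.degree b : ℚ) ^ 3, fun a b => by ring⟩ e with hSA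
  set SB : ℚ := ∑ e ∈ G.edgeFinset,
    Sym2.lift ⟨fun u v => ∑ w : V, (if w = u ∨ w = v then 0 else
      ((if G.Adj u w then (1:ℚ) else 0) + (if G.Adj v w then 1 else 0)) * h w), pB⟩ e with hSB
  -- evaluate SA
  have eA : 2 * SA = 2 * ∑ v : V, (G.degree v : ℚ) ^ 4 := by
    rw [hSA, two_mul_sum_edge]
    have h1 : SS G (fun a b => (G.degree a : ℚ) ^ 3 + (G.degree b : ℚ) ^ 3)
        = SS G (fun a _ => (G.degree a : ℚ) ^ 3) + SS G (fun _ b => (G.degree b : ℚ) ^ 3) :=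
      SS_add G _ _
    rw [h1, SS_left, SS_right, ← Finset.sum_add_distrib, Finset.mul_sum]
    refine sum_congr rfl fun v _ => ?_
    ring
  -- evaluate SB
  have eB : 2 * SB = 2 * ((∑ v : V, (G.degree v : ℚ) *
        (∑ w : V, if G.Adj v w then h w else 0)) - ∑ u : V, (G.degree u : ℚ) * h u) := by
    rw [hSB, two_mul_sum_edge, SS_b]
  set P : ℚ := ∑ v : V, (G.degree v : ℚ) * (∑ w : V, if G.Adj v w then h w else 0) with hP
  set Q : ℚ := ∑ u : V, (G.degree u : ℚ) * h u with hQ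
  set Sa : ℚ := SS G (fun u v => (G.degree u : ℚ) * (G.degree v : ℚ) ^ 2) with hSa
  set Sm : ℚ := SS G (fun u v => (G.degree u : ℚ) * (G.degree v : ℚ)) with hSm
  have eP : P = 3 * Sa - 3 * Sm + ∑ u : V, (G.degree u : ℚ) ^ 2 := by
    have h1 : P = SS G (fun v w => (G.degree v : ℚ) * h w) := by
      rw [hP]
      unfold SS
      refine sum_congr rfl fun v _ => ?_
      rw [Finset.mul_sum]
      refine sum_congr rfl fun w _ => ?_
      split_ifs <;> simp
    have h2 : SS G (fun v w => (G.degree v : ℚ) * h w)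
        = SS G (fun v w => (3 * ((G.degree v : ℚ) * (G.degree w : ℚ) ^ 2)
            - 3 * ((G.degree v : ℚ) * (G.degree w : ℚ))) + (G.degree v : ℚ)) :=
      SS_congr G _ _ (fun u v => by rw [hh]; ring)
    have h3 : SS G (fun v w => (3 * ((G.degree v : ℚ) * (G.degree w : ℚ) ^ 2)
            - 3 * ((G.degree v : ℚ) * (G.degree w : ℚ))) + (G.degree v : ℚ))
        = SS G (fun v w => 3 * ((G.degree v : ℚ) * (G.degree w : ℚ) ^ 2)
            - 3 * ((G.degree v : ℚ) * (G.degree w : ℚ))) + SS G (fun v _ => (G.degree v : ℚ)) :=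
      SS_add G _ _
    have h4 : SS G (fun v w => 3 * ((G.degree v : ℚ) * (G.degree w : ℚ) ^ 2)
            - 3 * ((G.degree v : ℚ) * (G.degree w : ℚ)))
        = SS G (fun v w => 3 * ((G.degree v : ℚ) * (G.degree w : ℚ) ^ 2))
          - SS G (fun v w => 3 * ((G.degree v : ℚ) * (G.degree w : ℚ))) := SS_sub G _ _
    have h5 : SS G (fun v w => 3 * ((G.degree v : ℚ) * (G.degree w : ℚ) ^ 2)) = 3 * Sa :=
      SS_mulc G 3 _
    have h6 : SS G (fun v w => 3 * ((G.degree v : ℚ) * (G.degree w : ℚ))) = 3 * Sm :=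
      SS_mulc G 3 _
    have h7 : SS G (fun v _ => (G.degree v : ℚ)) = ∑ u : V, (G.degree u : ℚ) * (G.degree u : ℚ) :=
      SS_left G _
    rw [h1, h2, h3, h4, h5, h6, h7]
    have : ∑ u : V, (G.degree u : ℚ) * (G.degree u : ℚ) = ∑ u : V, (G.degree u : ℚ) ^ 2 :=
      sum_congr rfl fun u _ => by ring
    rw [this]
  have eQ : Q = 3 * (∑ u : V, (G.degree u : ℚ) ^ 3) - 3 * (∑ u : V, (G.degree u : ℚ) ^ 2)
      + ∑ u : V, (G.degree u : ℚ) := by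
    rw [hQ, Finset.mul_sum, Finset.mul_sum, ← Finset.sum_sub_distrib, ← Finset.sum_add_distrib]
    refine sum_congr rfl fun u _ => ?_
    rw [hh]
    ring
  -- Sa and Sm in terms of alpha and M2
  have eSm : Sm = 2 * (M2 G : ℚ) := (M2_cast G).symm
  have eSa : 2 * Sa = 2 * (alphaI G : ℚ) := by
    have h1 := alpha_cast G
    have h2 : SS G (fun u v => (G.degree u : ℚ) * (G.degree v : ℚ)
          * ((G.degree u : ℚ) + (G.degree v : ℚ)))
        = SS G (fun u v => (G.degree u : ℚ) ^ 2 * (G.degree v : ℚ)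
            + (G.degree u : ℚ) * (G.degree v : ℚ) ^ 2) :=
      SS_congr G _ _ (fun u v => by ring)
    have h3 : SS G (fun u v => (G.degree u : ℚ) ^ 2 * (G.degree v : ℚ)
            + (G.degree u : ℚ) * (G.degree v : ℚ) ^ 2)
        = SS G (fun u v => (G.degree u : ℚ) ^ 2 * (G.degree v : ℚ))
          + SS G (fun u v => (G.degree u : ℚ) * (G.degree v : ℚ) ^ 2) := SS_add G _ _
    have h4 : SS G (fun u v => (G.degree u : ℚ) ^ 2 * (G.degree v : ℚ)) = Sa := by
      rw [SS_swap]
      exact SS_congr G _ _ (fun u v => by ring)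
    rw [h2, h3, h4, ← hSa] at h1
    linarith
  -- casts
  have cM1 : (M1 G : ℚ) = ∑ u : V, (G.degree u : ℚ) ^ 2 := by
    unfold M1 M1gen; push_cast; rfl
  have cF : (Fidx G : ℚ) = ∑ u : V, (G.degree u : ℚ) ^ 3 := by
    unfold Fidx M1gen; push_cast; rfl
  have cM14 : (M1gen G 4 : ℚ) = ∑ u : V, (G.degree u : ℚ) ^ 4 := by
    unfold M1gen; push_cast; rfl
  have cdeg : ∑ u : V, (G.degree u : ℚ) = 2 * m := by
    rw [hm]
    exact_mod_cast G.sum_degrees_eq_twice_card_edges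
  linarith [eA, eB, eP, eQ, eSm, eSa, cM1, cF, cM14, cdeg]


end PaperMatching
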